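/- arXiv:1711.05933 — 3 statements merged into one kernel-verified Lean document; each statement's English description precedes it below -/
import Mathlib

section
/- Suppose the homomorphism θ'̄ : H²(G/Z, D) → H²(H/Z, D) ⊕ H²(K/Z, D) ⊕ Hom(H/Z ⊗ K/Z, D), defined for the central product G/Z of H/Z and K/Z in the same way as θ', is an isomorphism. Then the inflation maps H²(H/A, D) → H²(H/Z, D) and H²(K/A, D) → H²(K/Z, D) are surjective, and the homomorphism λ* : Hom(H/A ⊗ K/A, D) → Hom(H/Z ⊗ K/Z, D) induced by the natural projection H/Z ⊗ K/Z → H/A ⊗ K/A is an isomorphism; consequently, if the embedding of Theorem B(ii) is an isomorphism, then so is the embedding of Theorem B(i). -/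
/-!
Setting (central products): `G` is a group with normal subgroups `H` and `K` such that
`G = HK` (i.e. `H ⊔ K = ⊤`) and `[H, K] = 1` (i.e. every element of `H` commutes with
every element of `K`).  We set `A = H ⊓ K` and `Z = ⁅H,H⁆ ⊓ ⁅K,K⁆`; both are central
in `G`.  Coefficients are taken in a divisible abelian group `D`, regarded as a trivial
module.  Second cohomology `H2 X D` is realized concretely as (inhomogeneous)
2-cocycles modulo 2-coboundaries, and `Hom(X, D)` is realized as `Additive X →+ D`.
-/

open scoped TensorProduct

set_option maxHeartbeats 1000000
set_option synthInstance.maxHeartbeats 1000000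
set_option synthInstance.maxSize 2000

namespace SchurCP

variable (G : Type) [Group G] (D : Type) [AddCommGroup D]

/-- The group of 2-cocycles on `G` with values in the trivial module `D`. -/
def cocycles2 : AddSubgroup (G → G → D) where
  carrier := {f | ∀ g h k : G, f g h + f (g * h) k = f h k + f g (h * k)}
  zero_mem' := by intro g h k; simp
  add_mem' := by
    intro a b ha hb g h k
    simp only [Pi.add_apply]
    rw [add_add_add_comm, ha g h k, hb g h k, add_add_add_comm]
  neg_mem' := by
    intro a ha g h k
    simp only [Pi.neg_apply]
    rw [← neg_add, ← neg_add, ha g h k]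

/-- The group of 2-coboundaries on `G` with values in the trivial module `D`. -/
def coboundaries2 : AddSubgroup (G → G → D) where
  carrier := {f | ∃ φ : G → D, ∀ g h : G, f g h = φ g + φ h - φ (g * h)}
  zero_mem' := ⟨0, by simp⟩
  add_mem' := by
    rintro a b ⟨φ, hφ⟩ ⟨ψ, hψ⟩
    exact ⟨φ + ψ, fun g h => by simp only [Pi.add_apply, hφ g h, hψ g h]; abel⟩
  neg_mem' := by
    rintro a ⟨φ, hφ⟩
    exact ⟨-φ, fun g h => by simp only [Pi.neg_apply, hφ g h]; abel⟩

/-- The second cohomology group `H²(G, D)` of `G` with coefficients in the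
trivial module `D`. -/
def H2 : Type := cocycles2 G D ⧸ (coboundaries2 G D).addSubgroupOf (cocycles2 G D)

instance : AddCommGroup (H2 G D) :=
  QuotientAddGroup.Quotient.addCommGroup ((coboundaries2 G D).addSubgroupOf (cocycles2 G D))

variable {G D}

/-- The cohomology class of a 2-cocycle. -/
abbrev H2mk (f : cocycles2 G D) : H2 G D := QuotientAddGroup.mk f

/-- Pullback of a 2-cocycle along a group homomorphism. -/
def pullCocycle {G' : Type} [Group G'] (π : G' →* G) :
    cocycles2 G D →+ cocycles2 G' D where
  toFun f := ⟨fun x y => (f : G → G → D) (π x) (π y), by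
    intro x y z
    simpa only [map_mul] using f.2 (π x) (π y) (π z)⟩
  map_zero' := rfl
  map_add' _ _ := rfl

/-- The homomorphism `H²(G, D) → H²(G', D)` induced by a group homomorphism
`π : G' → G`; this specializes to restriction maps (for inclusions of subgroups)
and to inflation maps (for quotient maps). -/
def H2Map {G' : Type} [Group G'] (π : G' →* G) : H2 G D →+ H2 G' D :=
  QuotientAddGroup.map _ _ (pullCocycle π) (by
    intro f hf
    rw [AddSubgroup.mem_addSubgroupOf] at hf
    rw [AddSubgroup.mem_comap, AddSubgroup.mem_addSubgroupOf]
    obtain ⟨φ, hφ⟩ := hf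
    exact ⟨fun x => φ (π x), fun x y => by
      show (f : G → G → D) (π x) (π y) = _
      rw [hφ (π x) (π y), ← map_mul]⟩)

theorem commutator_le_self {X : Type} [Group X] (H : Subgroup X) : ⁅H, H⁆ ≤ H := by
  rw [Subgroup.commutator_le]
  intro g₁ h₁ g₂ h₂
  rw [commutatorElement_def]
  exact H.mul_mem (H.mul_mem (H.mul_mem h₁ h₂) (H.inv_mem h₁)) (H.inv_mem h₂)

theorem inf_commutator_le_inf {X : Type} [Group X] (H K : Subgroup X) :
    ⁅H, H⁆ ⊓ ⁅K, K⁆ ≤ H ⊓ K :=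
  inf_le_inf (commutator_le_self H) (commutator_le_self K)

theorem subgroupOf_le {X : Type} [Group X] {B C : Subgroup X} (h : B ≤ C)
    (J : Subgroup X) : B.subgroupOf J ≤ C.subgroupOf J := fun _x hx => h hx

/-- The natural projection `X/N → X/M` for `N ≤ M`. -/
def quotProj {X : Type} [Group X] {N M : Subgroup X} [N.Normal] [M.Normal] (h : N ≤ M) :
    (X ⧸ N) →* (X ⧸ M) :=
  QuotientGroup.map N M (MonoidHom.id X) (by rwa [Subgroup.comap_id])

/-- The inflation homomorphism `H²(X/M, D) → H²(X/N, D)` for `N ≤ M`. -/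
def inflMap {X : Type} [Group X] {N M : Subgroup X} [N.Normal] [M.Normal]
    (h : N ≤ M) (D : Type) [AddCommGroup D] : H2 (X ⧸ M) D →+ H2 (X ⧸ N) D :=
  H2Map (quotProj h)

/-- The natural homomorphism `H/(A ∩ H) → X/A` for subgroups `A, H` of `X`;
for `A ≤ H` this realizes `H/A` as a subgroup of `X/A`. -/
def quotInclusion {X : Type} [Group X] (H A : Subgroup X) [A.Normal]
    [(A.subgroupOf H).Normal] : (↥H ⧸ A.subgroupOf H) →* X ⧸ A :=
  QuotientGroup.map (A.subgroupOf H) A H.subtype (fun _x hx => hx)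

/-- The abelian tensor product `X ⊗ Y = X/[X,X] ⊗_ℤ Y/[Y,Y]` of two groups. -/
abbrev AbTensor (X Y : Type) [Group X] [Group Y] : Type :=
  TensorProduct ℤ (Additive (Abelianization X)) (Additive (Abelianization Y))

/-- The element `x[X,X] ⊗ y[Y,Y]` of the abelian tensor product. -/
noncomputable abbrev tmulAb {X Y : Type} [Group X] [Group Y] (x : X) (y : Y) :
    AbTensor X Y :=
  Additive.ofMul (Abelianization.of x) ⊗ₜ[ℤ] Additive.ofMul (Abelianization.of y)

/-- The map on abelian tensor products induced by a pair of group homomorphisms. -/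
noncomputable def abTensorMap {X Y X' Y' : Type} [Group X] [Group Y] [Group X'] [Group Y']
    (f : X →* X') (g : Y →* Y') : AbTensor X Y →ₗ[ℤ] AbTensor X' Y' :=
  TensorProduct.map (MonoidHom.toAdditive (Abelianization.map f)).toIntLinearMap
    (MonoidHom.toAdditive (Abelianization.map g)).toIntLinearMap

/-!
Take `η ∈ H²(H/Z, D)`. Bijectivity of `θ'̄` gives a class on `G/Z`, represented by a cocycle
`f`, that restricts to `η` on `H/Z`, to `0` on `K/Z`, and has `ν = 0`, i.e. `f(h, k) = f(k, h)`.
The image `A/Z` of `A` in `H/Z` is central, the restriction of `η` to it factors through `K/Z`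
and hence vanishes, and `f` is symmetric on `A/Z × H/Z`. So the central extension of `H/Z` given
by `f` splits over `A/Z` by a central splitting, and dividing it out yields an extension of
`H/A` whose class inflates to `η`.

`λ*` is injective because `H/Z ⊗ K/Z → H/A ⊗ K/A` is onto. Given `φ`, take a class with
image `(0, 0, φ)`: its cocycle is a coboundary on `H/Z` and on `K/Z`, hence symmetric on
commuting pairs there, so `φ` kills `A/Z ⊗ K/Z` and `H/Z ⊗ A/Z`. By right exactness of `⊗`,
`φ` factors through `H/A ⊗ K/A`.

The last assertion is transport of structure along `H²(H/A, D)/ker ≅ H²(H/Z, D)`, its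
analogue for `K`, and `Hom(H ⊗ K, D) ≅ Hom(H/Z ⊗ K/Z, D) ≅ Hom(H/A ⊗ K/A, D)`, the first of
which holds because `Z ≤ [H, H] ∩ [K, K]`.
-/

section Cocycles

variable {Q P D : Type} [Group Q] [Group P] [AddCommGroup D]

theorem H2mk_surjective : Function.Surjective (H2mk : cocycles2 Q D → H2 Q D) :=
  QuotientAddGroup.mk_surjective

theorem H2Map_H2mk (π : P →* Q) (f : cocycles2 Q D) :
    H2Map π (H2mk f) = H2mk (pullCocycle π f) := rfl

theorem H2Map_comp {R : Type} [Group R] (π : P →* Q) (κ : R →* P) (ξ : H2 Q D) :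
    H2Map (π.comp κ) ξ = H2Map κ (H2Map π ξ) := by
  obtain ⟨f, rfl⟩ := H2mk_surjective ξ
  rfl

theorem H2mk_eq_zero_iff (f : cocycles2 Q D) :
    H2mk f = 0 ↔ ∃ φ : Q → D, ∀ x y, f.1 x y = φ x + φ y - φ (x * y) :=
  (QuotientAddGroup.eq_zero_iff _).trans AddSubgroup.mem_addSubgroupOf

theorem H2mk_eq_H2mk_iff (f g : cocycles2 Q D) :
    H2mk f = H2mk g ↔ ∃ φ : Q → D, ∀ x y, f.1 x y - g.1 x y = φ x + φ y - φ (x * y) :=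
  QuotientAddGroup.eq_iff_sub_mem.trans AddSubgroup.mem_addSubgroupOf

theorem cocycle_one_left (f : cocycles2 Q D) (q : Q) : f.1 1 q = f.1 1 1 := by
  have h := f.2 1 1 q
  simp only [one_mul] at h
  exact (add_right_cancel h).symm

theorem cocycle_one_right (f : cocycles2 Q D) (q : Q) : f.1 q 1 = f.1 1 1 := by
  have h := f.2 q 1 1
  simp only [mul_one] at h
  exact add_right_cancel h

theorem cocycle_comm_of_H2Map_eq_zero (π : P →* Q) (f : cocycles2 Q D)
    (hf : H2Map π (H2mk f) = 0) {x y : P} (hxy : Commute x y) :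
    f.1 (π x) (π y) = f.1 (π y) (π x) := by
  obtain ⟨φ, hφ⟩ := (H2mk_eq_zero_iff _).mp hf
  change (pullCocycle π f).1 x y = (pullCocycle π f).1 y x
  rw [hφ, hφ, hxy.eq, add_comm (φ x)]

theorem H2Map_eq_zero_of_range_le {R : Type} [Group R] (π : P →* Q) (hπ : Function.Injective π)
    (ρ : R →* Q) (hρ : ρ.range ≤ π.range) {ξ : H2 Q D} (hξ : H2Map π ξ = 0) :
    H2Map ρ ξ = 0 := by
  let κ : R →* P := (MonoidHom.ofInjective hπ).symm.toMonoidHom.comp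
    (ρ.codRestrict π.range fun r => hρ ⟨r, rfl⟩)
  have hρκ : ρ = π.comp κ := by
    ext r
    exact (MonoidHom.apply_ofInjective_symm hπ ⟨ρ r, hρ ⟨r, rfl⟩⟩).symm
  rw [hρκ, H2Map_comp, hξ, map_zero]

end Cocycles

section CentralExtension

variable {Q Q' E D : Type} [Group Q] [Group Q'] [Group E] [AddCommGroup D]

structure IsCentralEmbedding (ι : D → E) : Prop where
  map_add : ∀ d d', ι (d + d') = ι d * ι d'
  commute : ∀ d e, Commute (ι d) e
  injective : Function.Injective ι

namespace IsCentralEmbedding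

variable {ι : D → E} (hι : IsCentralEmbedding ι)
include hι

theorem mul_mul_mul_comm (d d' : D) (x y : E) :
    ι d * x * (ι d' * y) = ι (d + d') * (x * y) := by
  rw [hι.map_add, mul_assoc, ← mul_assoc x, ← (hι.commute d' x).eq]
  group

theorem eq_of_mul_eq_mul {d d' : D} {x : E} (h : ι d * x = ι d' * x) : d = d' :=
  hι.injective (mul_right_cancel h)

theorem factorSet_cocycle {L : Q → E} {v : Q → Q → D}
    (hL : ∀ x y, L x * L y = ι (v x y) * L (x * y)) (x y z : Q) :
    v x y + v (x * y) z = v y z + v x (y * z) := by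
  apply hι.eq_of_mul_eq_mul (x := L (x * y * z))
  calc ι (v x y + v (x * y) z) * L (x * y * z)
      = L x * L y * L z := by rw [hι.map_add, mul_assoc, ← hL, ← mul_assoc, ← hL]
    _ = L x * (L y * L z) := mul_assoc _ _ _
    _ = ι (v y z + v x (y * z)) * L (x * y * z) := by
      rw [hL y z, ← mul_assoc, ← (hι.commute _ _).eq, mul_assoc, hL, ← mul_assoc,
        ← hι.map_add, mul_assoc x]

/-- The cocycle on `Q'` is the factor set of `M ∘ σ` for a section `σ` of `p`. -/
theorem H2mk_mem_range_of_factorSet (p : Q →* Q') (hp : Function.Surjective p)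
    (f : cocycles2 Q D) (M : Q → E) (hM : ∀ q q', M q * M q' = ι (f.1 q q') * M (q * q'))
    (hker : ∀ b ∈ p.ker, ∀ q, ∃ d, M (b * q) = ι d * M q) :
    H2mk f ∈ (H2Map p).range := by
  set σ := Function.surjInv hp
  have hσ : ∀ x, p (σ x) = x := Function.surjInv_eq hp
  have hfib : ∀ q, ∃ d, M q = ι d * M (σ (p q)) := by
    intro q
    obtain ⟨d, hd⟩ := hker (q * (σ (p q))⁻¹) (by simp [hσ]) (σ (p q))
    exact ⟨d, by rw [← hd, inv_mul_cancel_right]⟩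
  choose χ hχ using hfib
  have hL : ∀ x y, ∃ d, M (σ x) * M (σ y) = ι d * M (σ (x * y)) := by
    intro x y
    refine ⟨f.1 (σ x) (σ y) + χ (σ x * σ y), ?_⟩
    rw [hM, hχ (σ x * σ y), map_mul, hσ, hσ, ← mul_assoc, ← hι.map_add]
  choose v hv using hL
  refine ⟨H2mk ⟨v, hι.factorSet_cocycle hv⟩,
    (H2mk_eq_H2mk_iff _ _).mpr ⟨fun q => -χ q, fun q q' => ?_⟩⟩
  have hprod : M q * M q' = ι (χ q + χ q' + v (p q) (p q')) * M (σ (p (q * q'))) := by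
    rw [hχ q, hχ q', hι.mul_mul_mul_comm, hv, ← mul_assoc, ← hι.map_add, map_mul]
  have key : χ q + χ q' + v (p q) (p q') = f.1 q q' + χ (q * q') := by
    refine hι.eq_of_mul_eq_mul (hprod.symm.trans ?_)
    rw [hM, hχ (q * q'), ← mul_assoc, ← hι.map_add]
  change v (p q) (p q') - f.1 q q' = -χ q + -χ q' - -χ (q * q')
  rw [eq_sub_of_add_eq' key.symm]
  abel

end IsCentralEmbedding

end CentralExtension

section Extension

variable {Q Q' D : Type} [Group Q] [Group Q'] [AddCommGroup D]

@[ext]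
structure Extension (f : cocycles2 Q D) where
  fst : D
  snd : Q

namespace Extension

variable {f : cocycles2 Q D}

instance : Mul (Extension f) := ⟨fun x y => ⟨x.fst + y.fst + f.1 x.snd y.snd, x.snd * y.snd⟩⟩

-- `f` need not be normalised, so the identity is not `⟨0, 1⟩`.
instance : One (Extension f) := ⟨⟨-f.1 1 1, 1⟩⟩

instance : Inv (Extension f) := ⟨fun x => ⟨-f.1 1 1 - x.fst - f.1 x.snd⁻¹ x.snd, x.snd⁻¹⟩⟩

instance : Group (Extension f) :=
  Group.ofLeftAxioms
    (fun x y z => Extension.ext (by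
      change x.fst + y.fst + f.1 x.snd y.snd + z.fst + f.1 (x.snd * y.snd) z.snd
        = x.fst + (y.fst + z.fst + f.1 y.snd z.snd) + f.1 x.snd (y.snd * z.snd)
      calc _ = x.fst + y.fst + z.fst + (f.1 x.snd y.snd + f.1 (x.snd * y.snd) z.snd) := by abel
        _ = _ := by rw [f.2 x.snd y.snd z.snd]; abel) (mul_assoc x.snd y.snd z.snd))
    (fun x => Extension.ext (by
      change -f.1 1 1 + x.fst + f.1 1 x.snd = x.fst
      rw [cocycle_one_left f x.snd]
      abel) (one_mul x.snd))
    (fun x => Extension.ext (by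
      change -f.1 1 1 - x.fst - f.1 x.snd⁻¹ x.snd + x.fst + f.1 x.snd⁻¹ x.snd = -f.1 1 1
      abel) (inv_mul_cancel x.snd))

def central (d : D) : Extension f := ⟨d - f.1 1 1, 1⟩

theorem central_mul (d : D) (x : Extension f) : central d * x = ⟨d + x.fst, x.snd⟩ := by
  refine Extension.ext ?_ (one_mul x.snd)
  change d - f.1 1 1 + x.fst + f.1 1 x.snd = d + x.fst
  rw [cocycle_one_left f x.snd]
  abel

theorem mul_central (d : D) (x : Extension f) : x * central d = ⟨d + x.fst, x.snd⟩ := by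
  refine Extension.ext ?_ (mul_one x.snd)
  change x.fst + (d - f.1 1 1) + f.1 x.snd 1 = d + x.fst
  rw [cocycle_one_right f x.snd]
  abel

theorem commute_central (d : D) (x : Extension f) : Commute (central d) x :=
  (central_mul d x).trans (mul_central d x).symm

theorem mk_mul_mk (q q' : Q) :
    (⟨0, q⟩ : Extension f) * ⟨0, q'⟩ = central (f.1 q q') * ⟨0, q * q'⟩ := by
  rw [central_mul]
  exact Extension.ext (by change 0 + 0 + _ = _ + 0; abel) rfl

theorem isCentralEmbedding_mk_central (S : Subgroup (Extension f)) [S.Normal]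
    (hS : ∀ x ∈ S, x.snd = 1 → x = 1) :
    IsCentralEmbedding fun d : D => ((central d : Extension f) : Extension f ⧸ S) := by
  refine ⟨fun d d' => ?_, fun d x => ?_, fun d d' h => ?_⟩
  · rw [← QuotientGroup.mk_mul, central_mul]
    exact congrArg _ (Extension.ext (by change d + d' - _ = d + (d' - _); abel) rfl)
  · induction x using QuotientGroup.induction_on with
    | H x => exact (commute_central d x).map (QuotientGroup.mk' S)
  · have h1 := hS _ (QuotientGroup.eq.mp h) (inv_mul_cancel (1 : Q))
    rw [inv_mul_eq_one] at h1
    exact sub_left_injective (congrArg Extension.fst h1)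

def splitting (B : Subgroup Q) (ψ : B → D)
    (hψ : ∀ b b' : B, f.1 b b' = ψ b + ψ b' - ψ (b * b')) : B →* Extension f where
  toFun b := ⟨-ψ b, b⟩
  map_one' := Extension.ext (by
    have h := hψ 1 1
    rw [mul_one, add_sub_cancel_right] at h
    exact congrArg Neg.neg h.symm) rfl
  map_mul' b b' := Extension.ext (by
    change -ψ (b * b') = -ψ b + -ψ b' + f.1 b b'
    rw [hψ]
    abel) rfl

variable {B : Subgroup Q} {ψ : B → D} {hψ : ∀ b b' : B, f.1 b b' = ψ b + ψ b' - ψ (b * b')}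

theorem commute_splitting (hcent : ∀ b ∈ B, ∀ q, Commute b q)
    (hsymm : ∀ b ∈ B, ∀ q, f.1 b q = f.1 q b) (b : B) (x : Extension f) :
    Commute (splitting B ψ hψ b) x := Extension.ext (by
  change -ψ b + x.fst + f.1 b x.snd = x.fst + -ψ b + f.1 x.snd b
  rw [hsymm b b.2, add_comm (-ψ b)]) (hcent b b.2 x.snd).eq

theorem splitting_mul_central_mul_mk (b : B) (q : Q) :
    splitting B ψ hψ b * central (ψ b - f.1 b q) * ⟨0, q⟩ = (⟨0, b * q⟩ : Extension f) := by
  rw [mul_assoc, central_mul]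
  exact Extension.ext (by
    change -ψ b + (ψ b - f.1 b q + 0) + f.1 b q = 0
    abel) rfl

end Extension

/-- The extension defined by `f` splits over `p.ker` by a central splitting; dividing it out
gives an extension of `Q'`. -/
theorem H2mk_mem_range_H2Map_of_central_ker (p : Q →* Q') (hp : Function.Surjective p)
    (f : cocycles2 Q D) (hcent : ∀ b ∈ p.ker, ∀ q, Commute b q)
    (hsymm : ∀ b ∈ p.ker, ∀ q, f.1 b q = f.1 q b) (hres : H2Map p.ker.subtype (H2mk f) = 0) :
    H2mk f ∈ (H2Map p).range := by
  obtain ⟨ψ, hψ⟩ := (H2mk_eq_zero_iff _).mp hres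
  set s := Extension.splitting p.ker ψ hψ
  have hs : ∀ b x, Commute (s b) x := Extension.commute_splitting hcent hsymm
  have : s.range.Normal := ⟨by
    rintro _ ⟨b, rfl⟩ x
    rw [← (hs b x).eq, mul_inv_cancel_right]
    exact ⟨b, rfl⟩⟩
  have hι := Extension.isCentralEmbedding_mk_central s.range (by
    rintro _ ⟨b, rfl⟩ hb
    rw [show b = 1 from Subtype.ext hb, map_one])
  refine hι.H2mk_mem_range_of_factorSet p hp f (fun q => ((⟨0, q⟩ : Extension f) : _ ⧸ s.range))
    (fun q q' => by rw [← QuotientGroup.mk_mul, Extension.mk_mul_mk, QuotientGroup.mk_mul])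
    fun b hb q => ⟨ψ ⟨b, hb⟩ - f.1 b q, ?_⟩
  rw [← Extension.splitting_mul_central_mul_mk (hψ := hψ) ⟨b, hb⟩, QuotientGroup.mk_mul,
    QuotientGroup.mk_mul, (QuotientGroup.eq_one_iff (N := s.range) _).mpr ⟨_, rfl⟩, one_mul]

end Extension

section Quotients

variable {X Y : Type} [Group X] [Group Y]

theorem quotProj_surjective {N M : Subgroup X} [N.Normal] [M.Normal] (h : N ≤ M) :
    Function.Surjective (quotProj h) :=
  QuotientGroup.map_surjective_of_surjective _ _ _ QuotientGroup.mk_surjective _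

theorem exists_mk_eq_of_mem_ker_quotProj {N M : Subgroup X} [N.Normal] [M.Normal] (h : N ≤ M)
    {x : X ⧸ N} (hx : x ∈ (quotProj h).ker) : ∃ m ∈ M, (m : X ⧸ N) = x := by
  rwa [quotProj, QuotientGroup.ker_map, Subgroup.comap_id] at hx

theorem quotInclusion_injective (H A : Subgroup X) [A.Normal] [(A.subgroupOf H).Normal] :
    Function.Injective (quotInclusion H A) := by
  rw [injective_iff_map_eq_one]
  intro x hx
  induction x using QuotientGroup.induction_on with
  | H x => exact (QuotientGroup.eq_one_iff x).mpr ((QuotientGroup.eq_one_iff (x : X)).mp hx)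

theorem subgroupOf_le_commutator {N H : Subgroup X} (hN : N ≤ ⁅H, H⁆) :
    N.subgroupOf H ≤ commutator H := fun _ hx =>
  (Subgroup.mem_map_iff_mem H.subtype_injective).mp (H.map_subtype_commutator.symm ▸ hN hx)

theorem abelianization_of_surjective : Function.Surjective (Abelianization.of : X →* _) :=
  QuotientGroup.mk_surjective

theorem abelianization_map_surjective (p : X →* Y) (hp : Function.Surjective p) :
    Function.Surjective (Abelianization.map p) := by
  intro w
  obtain ⟨y, rfl⟩ := abelianization_of_surjective w
  obtain ⟨x, rfl⟩ := hp y
  exact ⟨Abelianization.of x, Abelianization.map_of p x⟩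

theorem exists_of_eq_of_abelianization_map_eq_one (p : X →* Y) (hp : Function.Surjective p)
    {w : Abelianization X} (hw : Abelianization.map p w = 1) :
    ∃ x : X, p x = 1 ∧ Abelianization.of x = w := by
  obtain ⟨x, rfl⟩ := abelianization_of_surjective w
  have hc : p x ∈ (commutator X).map p := by
    rw [commutator_def, Subgroup.map_commutator, Subgroup.map_top_of_surjective p hp,
      ← commutator_def, ← Abelianization.ker_of]
    exact hw
  obtain ⟨c, hc, hpc⟩ := hc
  refine ⟨x * c⁻¹, by rw [map_mul, map_inv, hpc, mul_inv_cancel], ?_⟩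
  rw [← Abelianization.ker_of] at hc
  rw [map_mul, map_inv, hc, inv_one, mul_one]

noncomputable def abelianizationQuotientEquiv (N : Subgroup X) [N.Normal]
    (hN : N ≤ commutator X) : Abelianization X ≃* Abelianization (X ⧸ N) :=
  MulEquiv.ofBijective (Abelianization.map (QuotientGroup.mk' N))
    ⟨(injective_iff_map_eq_one _).mpr fun w hw => by
      obtain ⟨x, hx, rfl⟩ := exists_of_eq_of_abelianization_map_eq_one _
        (QuotientGroup.mk'_surjective N) hw
      rw [← MonoidHom.mem_ker, Abelianization.ker_of]
      exact hN ((QuotientGroup.eq_one_iff x).mp hx),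
    abelianization_map_surjective _ (QuotientGroup.mk'_surjective N)⟩

end Quotients

section Tensor

open TensorProduct

theorem exists_comp_tensorMap_eq {M N M' N' D : Type} [AddCommGroup M] [AddCommGroup N]
    [AddCommGroup M'] [AddCommGroup N'] [AddCommGroup D] {f : M →ₗ[ℤ] M'} {g : N →ₗ[ℤ] N'}
    (hf : Function.Surjective f) (hg : Function.Surjective g) (φ : M ⊗[ℤ] N →+ D)
    (hφf : ∀ m, f m = 0 → ∀ n, φ (m ⊗ₜ n) = 0) (hφg : ∀ n, g n = 0 → ∀ m, φ (m ⊗ₜ n) = 0) :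
    ∃ ψ : M' ⊗[ℤ] N' →+ D, ψ.comp (map f g).toAddMonoidHom = φ := by
  have hker : (map f g).toAddMonoidHom.ker ≤ φ.ker := by
    intro t ht
    change t ∈ LinearMap.ker (map f g) at ht
    rw [map_ker (LinearMap.exact_subtype_ker_map f) hf (LinearMap.exact_subtype_ker_map g) hg]
      at ht
    refine (sup_le (c := LinearMap.ker φ.toIntLinearMap) ?_ ?_) ht
    · rintro _ ⟨u, rfl⟩
      induction u using TensorProduct.induction_on with
      | zero => simp
      | tmul m n => exact hφg n.1 n.2 m
      | add u u' hu hu' => rw [map_add]; exact add_mem hu hu'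
    · rintro _ ⟨u, rfl⟩
      induction u using TensorProduct.induction_on with
      | zero => simp
      | tmul m n => exact hφf m.1 m.2 n
      | add u u' hu hu' => rw [map_add]; exact add_mem hu hu'
  exact ⟨_, AddMonoidHom.liftOfRightInverse_comp _ _
    (Function.rightInverse_surjInv (map_surjective hf hg)) ⟨φ, hker⟩⟩

variable {X Y X' Y' D : Type} [Group X] [Group Y] [Group X'] [Group Y'] [AddCommGroup D]

theorem abTensorMap_surjective {p : X →* X'} {q : Y →* Y'} (hp : Function.Surjective p)
    (hq : Function.Surjective q) : Function.Surjective (abTensorMap p q) :=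
  map_surjective (abelianization_map_surjective p hp) (abelianization_map_surjective q hq)

theorem exists_comp_abTensorMap_eq {p : X →* X'} {q : Y →* Y'} (hp : Function.Surjective p)
    (hq : Function.Surjective q) (φ : AbTensor X Y →+ D)
    (hφp : ∀ x, p x = 1 → ∀ y, φ (tmulAb x y) = 0)
    (hφq : ∀ y, q y = 1 → ∀ x, φ (tmulAb x y) = 0) :
    ∃ ψ : AbTensor X' Y' →+ D, ψ.comp (abTensorMap p q).toAddMonoidHom = φ := by
  refine exists_comp_tensorMap_eq (abelianization_map_surjective p hp)
    (abelianization_map_surjective q hq) φ (fun m hm n => ?_) (fun n hn m => ?_)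
  · obtain ⟨x, hx, rfl⟩ := exists_of_eq_of_abelianization_map_eq_one p hp hm
    obtain ⟨y, rfl⟩ := abelianization_of_surjective n.toMul
    exact hφp x hx y
  · obtain ⟨y, hy, rfl⟩ := exists_of_eq_of_abelianization_map_eq_one q hq hn
    obtain ⟨x, rfl⟩ := abelianization_of_surjective m.toMul
    exact hφq y hy x

noncomputable def abTensorQuotientEquiv (N : Subgroup X) [N.Normal] (hN : N ≤ commutator X)
    (L : Subgroup Y) [L.Normal] (hL : L ≤ commutator Y) :
    AbTensor X Y ≃+ AbTensor (X ⧸ N) (Y ⧸ L) :=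
  (TensorProduct.congr (MulEquiv.toAdditive (abelianizationQuotientEquiv N hN)).toIntLinearEquiv
    (MulEquiv.toAdditive (abelianizationQuotientEquiv L hL)).toIntLinearEquiv).toAddEquiv

end Tensor

theorem exists_quotient_prod_equiv_of_equiv {P P' C T T' Γ : Type} [AddCommGroup P]
    [AddCommGroup P'] [AddCommGroup C] [AddCommGroup T] [AddCommGroup T'] [AddCommGroup Γ]
    (e : P ≃+ P') (eT : T ≃+ T')
    (h : ∃ N : AddSubgroup P', Nonempty (N ≃+ C) ∧ Nonempty (Γ ≃+ (P' ⧸ N) × T)) :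
    ∃ N : AddSubgroup P, Nonempty (N ≃+ C) ∧ Nonempty (Γ ≃+ (P ⧸ N) × T') := by
  obtain ⟨N, ⟨eN⟩, ⟨eΓ⟩⟩ := h
  exact ⟨N.map e.symm.toAddMonoidHom, ⟨(e.symm.addSubgroupMap N).symm.trans eN⟩,
    ⟨eΓ.trans ((QuotientAddGroup.congr N _ e.symm rfl).prodCongr eT)⟩⟩

section CentralProduct

variable {G D : Type} [Group G] [AddCommGroup D] (H K A Z : Subgroup G) [Z.Normal]
  [(Z.subgroupOf H).Normal] [(Z.subgroupOf K).Normal]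

theorem inflMap_surjective [(A.subgroupOf H).Normal] (hZA : Z ≤ A) (hAK : A ≤ K)
    (hcomm : ∀ h ∈ H, ∀ k ∈ K, Commute h k)
    (hlift : ∀ η, ∃ f : cocycles2 (G ⧸ Z) D, H2Map (quotInclusion H Z) (H2mk f) = η ∧
      H2Map (quotInclusion K Z) (H2mk f) = 0 ∧ ∀ (h : H) (k : K), f.1 (h : G) k = f.1 (k : G) h) :
    Function.Surjective (inflMap (subgroupOf_le hZA H) D) := by
  intro η
  obtain ⟨f, rfl, hresK, hsymm⟩ := hlift η
  refine H2mk_mem_range_H2Map_of_central_ker _ (quotProj_surjective _) _ ?_ ?_ ?_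
  · intro b hb q
    obtain ⟨a, ha, rfl⟩ := exists_mk_eq_of_mem_ker_quotProj _ hb
    induction q using QuotientGroup.induction_on with
    | H x =>
      exact (show Commute a x from Subtype.ext (hcomm x x.2 a (hAK ha)).symm.eq).map
        (QuotientGroup.mk' _)
  · intro b hb q
    obtain ⟨a, ha, rfl⟩ := exists_mk_eq_of_mem_ker_quotProj _ hb
    induction q using QuotientGroup.induction_on with
    | H x => exact (hsymm x ⟨a, hAK ha⟩).symm
  · rw [← H2Map_H2mk, ← H2Map_comp]
    refine H2Map_eq_zero_of_range_le _ (quotInclusion_injective K Z) _ ?_ hresK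
    rintro _ ⟨⟨b, hb⟩, rfl⟩
    obtain ⟨a, ha, rfl⟩ := exists_mk_eq_of_mem_ker_quotProj _ hb
    exact ⟨(⟨a, hAK ha⟩ : K), rfl⟩

theorem comp_abTensorMap_bijective [(A.subgroupOf H).Normal] [(A.subgroupOf K).Normal]
    (hZA : Z ≤ A) (hAH : A ≤ H) (hAK : A ≤ K) (hcomm : ∀ h ∈ H, ∀ k ∈ K, Commute h k)
    (hlift : ∀ φ : AbTensor (H ⧸ Z.subgroupOf H) (K ⧸ Z.subgroupOf K) →+ D,
      ∃ f : cocycles2 (G ⧸ Z) D, H2Map (quotInclusion H Z) (H2mk f) = 0 ∧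
        H2Map (quotInclusion K Z) (H2mk f) = 0 ∧ ∀ (h : H) (k : K),
          φ (tmulAb (h : H ⧸ Z.subgroupOf H) (k : K ⧸ Z.subgroupOf K)) =
            f.1 (h : G) k - f.1 (k : G) h) :
    Function.Bijective fun φ : AbTensor (H ⧸ A.subgroupOf H) (K ⧸ A.subgroupOf K) →+ D =>
      φ.comp (abTensorMap (quotProj (subgroupOf_le hZA H))
        (quotProj (subgroupOf_le hZA K))).toAddMonoidHom := by
  refine ⟨fun φ ψ h => (AddMonoidHom.cancel_right
    (abTensorMap_surjective (quotProj_surjective _) (quotProj_surjective _))).mp h, fun φ => ?_⟩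
  obtain ⟨f, hresH, hresK, hφ⟩ := hlift φ
  refine exists_comp_abTensorMap_eq (quotProj_surjective _) (quotProj_surjective _) φ ?_ ?_
  · intro x hx y
    obtain ⟨a, ha, rfl⟩ := exists_mk_eq_of_mem_ker_quotProj _ hx
    induction y using QuotientGroup.induction_on with
    | H k =>
      rw [hφ, sub_eq_zero]
      exact cocycle_comm_of_H2Map_eq_zero _ f hresK
        ((show Commute (⟨a, hAK ha⟩ : K) k from Subtype.ext (hcomm a a.2 k k.2).eq).map
          (QuotientGroup.mk' _))
  · intro y hy x
    obtain ⟨a, ha, rfl⟩ := exists_mk_eq_of_mem_ker_quotProj _ hy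
    induction x using QuotientGroup.induction_on with
    | H h =>
      rw [hφ, sub_eq_zero]
      exact cocycle_comm_of_H2Map_eq_zero _ f hresH
        ((show Commute h ⟨a, hAH ha⟩ from Subtype.ext (hcomm h h.2 a a.2).eq).map
          (QuotientGroup.mk' _))

end CentralProduct

theorem second_iso_implies_first_general {G : Type} [Group G] (H K : Subgroup G)
    (hcomm : ∀ h ∈ H, ∀ k ∈ K, Commute h k)
    (D : Type) [AddCommGroup D]
    [(⁅H, H⁆ ⊓ ⁅K, K⁆).Normal]
    [((H ⊓ K).subgroupOf H).Normal] [((H ⊓ K).subgroupOf K).Normal]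
    [((⁅H, H⁆ ⊓ ⁅K, K⁆).subgroupOf H).Normal] [((⁅H, H⁆ ⊓ ⁅K, K⁆).subgroupOf K).Normal]
    (νbar : H2 (G ⧸ (⁅H, H⁆ ⊓ ⁅K, K⁆)) D →+
      (AbTensor (↥H ⧸ (⁅H, H⁆ ⊓ ⁅K, K⁆).subgroupOf H)
         (↥K ⧸ (⁅H, H⁆ ⊓ ⁅K, K⁆).subgroupOf K) →+ D))
    (hνbar : ∀ f : cocycles2 (G ⧸ (⁅H, H⁆ ⊓ ⁅K, K⁆)) D, ∀ (h : ↥H) (k : ↥K),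
      νbar (H2mk f)
          (tmulAb (QuotientGroup.mk h : ↥H ⧸ (⁅H, H⁆ ⊓ ⁅K, K⁆).subgroupOf H)
            (QuotientGroup.mk k : ↥K ⧸ (⁅H, H⁆ ⊓ ⁅K, K⁆).subgroupOf K)) =
        (f : (G ⧸ (⁅H, H⁆ ⊓ ⁅K, K⁆)) → (G ⧸ (⁅H, H⁆ ⊓ ⁅K, K⁆)) → D)
            (QuotientGroup.mk (↑h : G)) (QuotientGroup.mk (↑k : G)) -
        (f : (G ⧸ (⁅H, H⁆ ⊓ ⁅K, K⁆)) → (G ⧸ (⁅H, H⁆ ⊓ ⁅K, K⁆)) → D)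
            (QuotientGroup.mk (↑k : G)) (QuotientGroup.mk (↑h : G)))
    (hθbar : Function.Bijective (fun ξ : H2 (G ⧸ (⁅H, H⁆ ⊓ ⁅K, K⁆)) D =>
      (H2Map (quotInclusion H (⁅H, H⁆ ⊓ ⁅K, K⁆)) ξ,
       H2Map (quotInclusion K (⁅H, H⁆ ⊓ ⁅K, K⁆)) ξ, νbar ξ))) :
    Function.Surjective (inflMap (subgroupOf_le (inf_commutator_le_inf H K) H) D) ∧
    Function.Surjective (inflMap (subgroupOf_le (inf_commutator_le_inf H K) K) D) ∧
    Function.Bijective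
      (fun φ : (AbTensor (↥H ⧸ (H ⊓ K).subgroupOf H) (↥K ⧸ (H ⊓ K).subgroupOf K) →+ D) =>
        φ.comp (abTensorMap (quotProj (subgroupOf_le (inf_commutator_le_inf H K) H))
          (quotProj (subgroupOf_le (inf_commutator_le_inf H K) K))).toAddMonoidHom) ∧
    ((∃ N : AddSubgroup
          (H2 (↥H ⧸ (⁅H, H⁆ ⊓ ⁅K, K⁆).subgroupOf H) D ×
           H2 (↥K ⧸ (⁅H, H⁆ ⊓ ⁅K, K⁆).subgroupOf K) D),
        Nonempty (↥N ≃+ (Additive ↥(⁅H, H⁆ ⊓ ⁅K, K⁆) →+ D)) ∧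
        Nonempty (H2 G D ≃+
          (((H2 (↥H ⧸ (⁅H, H⁆ ⊓ ⁅K, K⁆).subgroupOf H) D ×
             H2 (↥K ⧸ (⁅H, H⁆ ⊓ ⁅K, K⁆).subgroupOf K) D) ⧸ N) ×
           (AbTensor ↥H ↥K →+ D)))) →
      (∃ N' : AddSubgroup
          ((H2 (↥H ⧸ (H ⊓ K).subgroupOf H) D ⧸
              AddMonoidHom.ker (inflMap (subgroupOf_le (inf_commutator_le_inf H K) H) D)) ×
           (H2 (↥K ⧸ (H ⊓ K).subgroupOf K) D ⧸
              AddMonoidHom.ker (inflMap (subgroupOf_le (inf_commutator_le_inf H K) K) D))),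
        Nonempty (↥N' ≃+ (Additive ↥(⁅H, H⁆ ⊓ ⁅K, K⁆) →+ D)) ∧
        Nonempty (H2 G D ≃+
          ((((H2 (↥H ⧸ (H ⊓ K).subgroupOf H) D ⧸
               AddMonoidHom.ker (inflMap (subgroupOf_le (inf_commutator_le_inf H K) H) D)) ×
             (H2 (↥K ⧸ (H ⊓ K).subgroupOf K) D ⧸
               AddMonoidHom.ker (inflMap (subgroupOf_le (inf_commutator_le_inf H K) K) D))) ⧸ N') ×
           (AbTensor (↥H ⧸ (H ⊓ K).subgroupOf H) (↥K ⧸ (H ⊓ K).subgroupOf K) →+ D))))) := by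
  have hZ := inf_commutator_le_inf H K
  have lift : ∀ η₁ η₂ φ, ∃ f : cocycles2 (G ⧸ (⁅H, H⁆ ⊓ ⁅K, K⁆)) D,
      H2Map (quotInclusion H _) (H2mk f) = η₁ ∧ H2Map (quotInclusion K _) (H2mk f) = η₂ ∧
        νbar (H2mk f) = φ := fun η₁ η₂ φ => by
    obtain ⟨ξ, hξ⟩ := hθbar.2 (η₁, η₂, φ)
    obtain ⟨f, rfl⟩ := H2mk_surjective ξ
    simp only [Prod.mk.injEq] at hξ
    exact ⟨f, hξ⟩
  have symm_of_νbar_eq_zero : ∀ f, νbar (H2mk f) = 0 → ∀ (h : H) (k : K),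
      f.1 (h : G) k = f.1 (k : G) h := fun f hf h k =>
    sub_eq_zero.mp (by rw [← hνbar, hf, AddMonoidHom.zero_apply])
  have hsurjH := inflMap_surjective H K (H ⊓ K) _ hZ inf_le_right hcomm fun η =>
    let ⟨f, hH, hK, hν⟩ := lift η 0 0
    ⟨f, hH, hK, symm_of_νbar_eq_zero f hν⟩
  have hsurjK := inflMap_surjective K H (H ⊓ K) _ hZ inf_le_left
    (fun k hk h hh => (hcomm h hh k hk).symm) fun η =>
      let ⟨f, hH, hK, hν⟩ := lift 0 η 0
      ⟨f, hK, hH, fun k h => (symm_of_νbar_eq_zero f hν h k).symm⟩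
  have hbij := comp_abTensorMap_bijective H K (H ⊓ K) _ hZ inf_le_left inf_le_right hcomm fun φ =>
    let ⟨f, hH, hK, hν⟩ := lift 0 0 φ
    ⟨f, hH, hK, fun h k => hν ▸ hνbar f h k⟩
  refine ⟨hsurjH, hsurjK, hbij, exists_quotient_prod_equiv_of_equiv
    ((QuotientAddGroup.quotientKerEquivOfSurjective _ hsurjH).prodCongr
      (QuotientAddGroup.quotientKerEquivOfSurjective _ hsurjK))
    ((AddEquiv.addMonoidHomCongrLeft (abTensorQuotientEquiv _
        (subgroupOf_le_commutator inf_le_left) _ (subgroupOf_le_commutator inf_le_right))).trans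
      (AddEquiv.ofBijective (AddMonoidHom.compHom' _) hbij).symm)⟩

/-- If `θ'̄ : H²(G/Z, D) → H²(H/Z, D) ⊕ H²(K/Z, D) ⊕ Hom(H/Z ⊗ K/Z, D)` is an
isomorphism, then the inflation maps `H²(H/A, D) → H²(H/Z, D)` and
`H²(K/A, D) → H²(K/Z, D)` are surjective and
`λ* : Hom(H/A ⊗ K/A, D) → Hom(H/Z ⊗ K/Z, D)` is an isomorphism; consequently, if the
embedding of Theorem B (ii) is an isomorphism, then so is the embedding of
Theorem B (i). -/
theorem second_iso_implies_first {G : Type} [Group G] (H K : Subgroup G) [H.Normal] [K.Normal]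
    (hprod : H ⊔ K = ⊤) (hcomm : ∀ h ∈ H, ∀ k ∈ K, Commute h k)
    (D : Type) [AddCommGroup D] [DivisibleBy D ℤ]
    [(⁅H, H⁆ ⊓ ⁅K, K⁆).Normal]
    [((H ⊓ K).subgroupOf H).Normal] [((H ⊓ K).subgroupOf K).Normal]
    [((⁅H, H⁆ ⊓ ⁅K, K⁆).subgroupOf H).Normal] [((⁅H, H⁆ ⊓ ⁅K, K⁆).subgroupOf K).Normal]
    (νbar : H2 (G ⧸ (⁅H, H⁆ ⊓ ⁅K, K⁆)) D →+
      (AbTensor (↥H ⧸ (⁅H, H⁆ ⊓ ⁅K, K⁆).subgroupOf H)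
         (↥K ⧸ (⁅H, H⁆ ⊓ ⁅K, K⁆).subgroupOf K) →+ D))
    (hνbar : ∀ f : cocycles2 (G ⧸ (⁅H, H⁆ ⊓ ⁅K, K⁆)) D, ∀ (h : ↥H) (k : ↥K),
      νbar (H2mk f)
          (tmulAb (QuotientGroup.mk h : ↥H ⧸ (⁅H, H⁆ ⊓ ⁅K, K⁆).subgroupOf H)
            (QuotientGroup.mk k : ↥K ⧸ (⁅H, H⁆ ⊓ ⁅K, K⁆).subgroupOf K)) =
        (f : (G ⧸ (⁅H, H⁆ ⊓ ⁅K, K⁆)) → (G ⧸ (⁅H, H⁆ ⊓ ⁅K, K⁆)) → D)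
            (QuotientGroup.mk (↑h : G)) (QuotientGroup.mk (↑k : G)) -
        (f : (G ⧸ (⁅H, H⁆ ⊓ ⁅K, K⁆)) → (G ⧸ (⁅H, H⁆ ⊓ ⁅K, K⁆)) → D)
            (QuotientGroup.mk (↑k : G)) (QuotientGroup.mk (↑h : G)))
    (hθbar : Function.Bijective (fun ξ : H2 (G ⧸ (⁅H, H⁆ ⊓ ⁅K, K⁆)) D =>
      (H2Map (quotInclusion H (⁅H, H⁆ ⊓ ⁅K, K⁆)) ξ,
       H2Map (quotInclusion K (⁅H, H⁆ ⊓ ⁅K, K⁆)) ξ, νbar ξ))) :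
    Function.Surjective (inflMap (subgroupOf_le (inf_commutator_le_inf H K) H) D) ∧
    Function.Surjective (inflMap (subgroupOf_le (inf_commutator_le_inf H K) K) D) ∧
    Function.Bijective
      (fun φ : (AbTensor (↥H ⧸ (H ⊓ K).subgroupOf H) (↥K ⧸ (H ⊓ K).subgroupOf K) →+ D) =>
        φ.comp (abTensorMap (quotProj (subgroupOf_le (inf_commutator_le_inf H K) H))
          (quotProj (subgroupOf_le (inf_commutator_le_inf H K) K))).toAddMonoidHom) ∧
    ((∃ N : AddSubgroup
          (H2 (↥H ⧸ (⁅H, H⁆ ⊓ ⁅K, K⁆).subgroupOf H) D ×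
           H2 (↥K ⧸ (⁅H, H⁆ ⊓ ⁅K, K⁆).subgroupOf K) D),
        Nonempty (↥N ≃+ (Additive ↥(⁅H, H⁆ ⊓ ⁅K, K⁆) →+ D)) ∧
        Nonempty (H2 G D ≃+
          (((H2 (↥H ⧸ (⁅H, H⁆ ⊓ ⁅K, K⁆).subgroupOf H) D ×
             H2 (↥K ⧸ (⁅H, H⁆ ⊓ ⁅K, K⁆).subgroupOf K) D) ⧸ N) ×
           (AbTensor ↥H ↥K →+ D)))) →
      (∃ N' : AddSubgroup
          ((H2 (↥H ⧸ (H ⊓ K).subgroupOf H) D ⧸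
              AddMonoidHom.ker (inflMap (subgroupOf_le (inf_commutator_le_inf H K) H) D)) ×
           (H2 (↥K ⧸ (H ⊓ K).subgroupOf K) D ⧸
              AddMonoidHom.ker (inflMap (subgroupOf_le (inf_commutator_le_inf H K) K) D))),
        Nonempty (↥N' ≃+ (Additive ↥(⁅H, H⁆ ⊓ ⁅K, K⁆) →+ D)) ∧
        Nonempty (H2 G D ≃+
          ((((H2 (↥H ⧸ (H ⊓ K).subgroupOf H) D ⧸
               AddMonoidHom.ker (inflMap (subgroupOf_le (inf_commutator_le_inf H K) H) D)) ×
             (H2 (↥K ⧸ (H ⊓ K).subgroupOf K) D ⧸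
               AddMonoidHom.ker (inflMap (subgroupOf_le (inf_commutator_le_inf H K) K) D))) ⧸ N') ×
           (AbTensor (↥H ⧸ (H ⊓ K).subgroupOf H) (↥K ⧸ (H ⊓ K).subgroupOf K) →+ D))))) :=
  second_iso_implies_first_general H K hcomm D νbar hνbar hθbar

end SchurCP
end

section
/- The sequence 1 → Z → (A ∩ [H,H]) × (A ∩ [K,K]) → A ∩ [G,G] → 1 is exact, where the first map sends z to (z, z⁻¹) and the second sends (x, y) to xy. In particular, A ∩ [G,G] = (A ∩ [H,H])(A ∩ [K,K]), and the kernel of the multiplication map (A ∩ [H,H]) × (A ∩ [K,K]) → A ∩ [G,G] is {(z, z⁻¹) : z ∈ Z}. -/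
/-!
Setting (central products): `G` is a group with normal subgroups `H` and `K` such that
`G = HK` (i.e. `H ⊔ K = ⊤`) and `[H, K] = 1` (i.e. every element of `H` commutes with
every element of `K`).  We set `A = H ⊓ K` and `Z = ⁅H,H⁆ ⊓ ⁅K,K⁆`; both are central
in `G`.  Coefficients are taken in a divisible abelian group `D`, regarded as a trivial
module.  Second cohomology `H2 X D` is realized concretely as (inhomogeneous)
2-cocycles modulo 2-coboundaries, and `Hom(X, D)` is realized as `Additive X →+ D`.
-/

open scoped TensorProduct

set_option maxHeartbeats 1000000
set_option synthInstance.maxHeartbeats 1000000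
set_option synthInstance.maxSize 2000

namespace SchurCP

variable (G : Type) [Group G] (D : Type) [AddCommGroup D]

variable {G D}

section CommutingSubgroups

variable {G : Type} [Group G] {H K : Subgroup G}

theorem le_normalizer_of_commute (hcomm : ∀ h ∈ H, ∀ k ∈ K, Commute h k) :
    H ≤ Subgroup.normalizer (K : Set G) := fun h hh =>
  Subgroup.centralizer_le_normalizer _ <|
    Subgroup.mem_centralizer_iff.2 fun k hk => (hcomm h hh k hk).eq.symm

theorem mem_sup_iff_of_commute (hcomm : ∀ h ∈ H, ∀ k ∈ K, Commute h k) {g : G} :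
    g ∈ H ⊔ K ↔ ∃ h ∈ H, ∃ k ∈ K, h * k = g := by
  rw [← SetLike.mem_coe, Subgroup.coe_mul_of_left_le_normalizer_right H K
    (le_normalizer_of_commute hcomm), Set.mem_mul]
  simp only [SetLike.mem_coe]

open scoped commutatorElement in
theorem commutatorElement_mul_mul_of_commute (hcomm : ∀ h ∈ H, ∀ k ∈ K, Commute h k)
    {h₁ h₂ k₁ k₂ : G} (hh₁ : h₁ ∈ H) (hh₂ : h₂ ∈ H) (hk₁ : k₁ ∈ K) (hk₂ : k₂ ∈ K) :
    ⁅h₁ * k₁, h₂ * k₂⁆ = ⁅h₁, h₂⁆ * ⁅k₁, k₂⁆ := by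
  -- `H × K → G, (h, k) ↦ hk` is a homomorphism, and commutators in `H × K` are componentwise.
  have := map_commutatorElement (MonoidHom.noncommCoprod H.subtype K.subtype
    (fun h k => hcomm h h.2 k k.2)) (⟨h₁, hh₁⟩, ⟨k₁, hk₁⟩) (⟨h₂, hh₂⟩, ⟨k₂, hk₂⟩)
  exact this.symm

theorem commutator_sup_le_of_commute (hcomm : ∀ h ∈ H, ∀ k ∈ K, Commute h k) :
    ⁅H ⊔ K, H ⊔ K⁆ ≤ ⁅H, H⁆ ⊔ ⁅K, K⁆ := by
  rw [Subgroup.commutator_le]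
  intro g₁ hg₁ g₂ hg₂
  obtain ⟨h₁, hh₁, k₁, hk₁, rfl⟩ := (mem_sup_iff_of_commute hcomm).1 hg₁
  obtain ⟨h₂, hh₂, k₂, hk₂, rfl⟩ := (mem_sup_iff_of_commute hcomm).1 hg₂
  rw [commutatorElement_mul_mul_of_commute hcomm hh₁ hh₂ hk₁ hk₂]
  exact mul_mem (Subgroup.mem_sup_left (Subgroup.commutator_mem_commutator hh₁ hh₂))
    (Subgroup.mem_sup_right (Subgroup.commutator_mem_commutator hk₁ hk₂))

theorem commutator_eq_sup_of_commute (hprod : H ⊔ K = ⊤)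
    (hcomm : ∀ h ∈ H, ∀ k ∈ K, Commute h k) : commutator G = ⁅H, H⁆ ⊔ ⁅K, K⁆ :=
  le_antisymm (by simpa only [hprod, commutator_def] using commutator_sup_le_of_commute hcomm)
    (sup_le (Subgroup.commutator_mono le_top le_top) (Subgroup.commutator_mono le_top le_top))

end CommutingSubgroups

theorem exact_sequence_A_inter_commutators_general {G : Type} [Group G] (H K : Subgroup G)
    (hprod : H ⊔ K = ⊤) (hcomm : ∀ h ∈ H, ∀ k ∈ K, Commute h k) :
    (∀ z ∈ ⁅H, H⁆ ⊓ ⁅K, K⁆, z ∈ H ⊓ K ⊓ ⁅H, H⁆ ∧ z⁻¹ ∈ H ⊓ K ⊓ ⁅K, K⁆) ∧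
    (∀ x ∈ H ⊓ K ⊓ ⁅H, H⁆, ∀ y ∈ H ⊓ K ⊓ ⁅K, K⁆, x * y ∈ H ⊓ K ⊓ commutator G) ∧
    (∀ g ∈ H ⊓ K ⊓ commutator G,
      ∃ x ∈ H ⊓ K ⊓ ⁅H, H⁆, ∃ y ∈ H ⊓ K ⊓ ⁅K, K⁆, x * y = g) ∧
    (∀ x ∈ H ⊓ K ⊓ ⁅H, H⁆, ∀ y ∈ H ⊓ K ⊓ ⁅K, K⁆,
      (x * y = 1 ↔ x ∈ ⁅H, H⁆ ⊓ ⁅K, K⁆ ∧ y = x⁻¹)) := by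
  refine ⟨fun z hz => ?_, fun x hx y hy => ?_, fun g hg => ?_, fun x hx y hy => ?_⟩
  · have hzA : z ∈ H ⊓ K := inf_commutator_le_inf H K hz
    rw [Subgroup.mem_inf] at hz
    exact ⟨⟨hzA, hz.1⟩, Subgroup.mem_inf.2 ⟨inv_mem hzA, inv_mem hz.2⟩⟩
  · rw [Subgroup.mem_inf] at hx hy
    exact ⟨mul_mem hx.1 hy.1, mul_mem (Subgroup.commutator_mono le_top le_top hx.2)
      (Subgroup.commutator_mono le_top le_top hy.2)⟩
  · obtain ⟨⟨hgH, hgK⟩, hgG⟩ := hg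
    rw [commutator_eq_sup_of_commute hprod hcomm] at hgG
    obtain ⟨x, hx, y, hy, rfl⟩ := (mem_sup_iff_of_commute fun h hh k hk =>
      hcomm h (commutator_le_self H hh) k (commutator_le_self K hk)).1 hgG
    have hxH := commutator_le_self H hx
    have hyK := commutator_le_self K hy
    -- `y = x⁻¹ (xy) ∈ H` and `x = (xy) y⁻¹ ∈ K` since `xy ∈ H ∩ K`.
    have hyH : y ∈ H := by simpa using H.mul_mem (H.inv_mem hxH) hgH
    have hxK : x ∈ K := by simpa using K.mul_mem hgK (K.inv_mem hyK)
    exact ⟨x, ⟨⟨hxH, hxK⟩, hx⟩, y, ⟨⟨hyH, hyK⟩, hy⟩, rfl⟩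
  · rw [Subgroup.mem_inf] at hx hy
    rw [mul_eq_one_iff_eq_inv']
    refine ⟨fun hyx => ⟨⟨hx.2, ?_⟩, hyx⟩, fun h => h.2⟩
    simpa [hyx] using ⁅K, K⁆.inv_mem hy.2

/-- The sequence `1 → Z → (A ∩ [H,H]) × (A ∩ [K,K]) → A ∩ [G,G] → 1`, with
`z ↦ (z, z⁻¹)` and `(x, y) ↦ xy`, is exact.  In particular
`A ∩ [G,G] = (A ∩ [H,H])(A ∩ [K,K])` and the kernel of the multiplication map is
`{(z, z⁻¹) : z ∈ Z}`. -/
theorem exact_sequence_A_inter_commutators {G : Type} [Group G] (H K : Subgroup G)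
    [H.Normal] [K.Normal]
    (hprod : H ⊔ K = ⊤) (hcomm : ∀ h ∈ H, ∀ k ∈ K, Commute h k) :
    (∀ z ∈ ⁅H, H⁆ ⊓ ⁅K, K⁆, z ∈ H ⊓ K ⊓ ⁅H, H⁆ ∧ z⁻¹ ∈ H ⊓ K ⊓ ⁅K, K⁆) ∧
    (∀ x ∈ H ⊓ K ⊓ ⁅H, H⁆, ∀ y ∈ H ⊓ K ⊓ ⁅K, K⁆, x * y ∈ H ⊓ K ⊓ commutator G) ∧
    (∀ g ∈ H ⊓ K ⊓ commutator G,
      ∃ x ∈ H ⊓ K ⊓ ⁅H, H⁆, ∃ y ∈ H ⊓ K ⊓ ⁅K, K⁆, x * y = g) ∧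
    (∀ x ∈ H ⊓ K ⊓ ⁅H, H⁆, ∀ y ∈ H ⊓ K ⊓ ⁅K, K⁆,
      (x * y = 1 ↔ x ∈ ⁅H, H⁆ ⊓ ⁅K, K⁆ ∧ y = x⁻¹)) :=
  exact_sequence_A_inter_commutators_general H K hprod hcomm

end SchurCP
end

section
/- Let G be a finite group that is the internal central product of its normal subgroups H and K, with A = H ∩ K and Z = [H,H] ∩ [K,K]. Then the Schur multiplier M(G) = H²(G, ℂ*) contains a subgroup isomorphic to Z × ((H/A) ⊗ (K/A)). -/
/-!
Setting (central products): `G` is a group with normal subgroups `H` and `K` such that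
`G = HK` (i.e. `H ⊔ K = ⊤`) and `[H, K] = 1` (i.e. every element of `H` commutes with
every element of `K`).  We set `A = H ⊓ K` and `Z = ⁅H,H⁆ ⊓ ⁅K,K⁆`; both are central
in `G`.  Coefficients are taken in a divisible abelian group `D`, regarded as a trivial
module.  Second cohomology `H2 X D` is realized concretely as (inhomogeneous)
2-cocycles modulo 2-coboundaries, and `Hom(X, D)` is realized as `Additive X →+ D`.
-/

open scoped TensorProduct

set_option maxHeartbeats 1000000
set_option synthInstance.maxHeartbeats 1000000
set_option synthInstance.maxSize 2000

namespace SchurCP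

variable (G : Type) [Group G] (D : Type) [AddCommGroup D]

variable {G D}

/-!
Fix a factorization `g = hp g * kp g` with `hp g ∈ H`, `kp g ∈ K`. The defect
`t x y = (hp (x * y))⁻¹ * (hp x * hp y)` lies in `A = H ⊓ K`, which is central, so `t` is a
2-cocycle with values in `A`; moreover `g ↦ hp g A` and `g ↦ kp g A` are homomorphisms
`G → H/A` and `G → K/A`. Hence a character `χ` of `A` and a character `ℓ` of `H/A ⊗ K/A` give
the 2-cocycle `χ (t x y) + ℓ (hp x A ⊗ kp y A)`, and its class vanishes exactly when `ℓ = 0` and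
`χ` is trivial on `Z`:
* coboundaries are symmetric on commuting pairs, and for `x ∈ H`, `y ∈ K` only the `ℓ`-term
  breaks the symmetry;
* on `H` and on `K` the cocycle is the coboundary of `-χ ∘ kp`, resp. `χ ∘ hp`, so a
  trivializing cochain differs from these by homomorphisms, which vanish on `[H,H]`, resp.
  `[K,K]`; evaluating at `z = hp z * kp z ∈ Z` gives `χ z = 0`;
* conversely, if `χ` is trivial on `Z`, it factors through `A → Hᵃᵇ × Kᵃᵇ, a ↦ (a, a⁻¹)`,
  whose kernel is `Z`, and extends since `ℂˣ` is divisible; this writes `χ ∘ t` as a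
  coboundary.
So `Hom(Z, ℂˣ) × Hom(H/A ⊗ K/A, ℂˣ)` embeds into `H²(G, ℂˣ)`, and a finite abelian group
embeds into its character group.
-/

section Coefficients

noncomputable instance {k : Type} [Field k] [IsAlgClosed k] : DivisibleBy (Additive kˣ) ℕ :=
  divisibleByOfSMulRightSurj _ _ fun {n} hn x => by
    obtain ⟨z, hz⟩ := IsAlgClosed.exists_pow_nat_eq (x.toMul : k) (Nat.pos_of_ne_zero hn)
    have hz0 : z ≠ 0 := by rintro rfl; exact x.toMul.ne_zero (by rw [← hz, zero_pow hn])
    exact ⟨.ofMul (Units.mk0 z hz0), Additive.toMul.injective (Units.ext (by simpa using hz))⟩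

noncomputable instance {k : Type} [Field k] [IsAlgClosed k] : DivisibleBy (Additive kˣ) ℤ :=
  AddGroup.divisibleByIntOfDivisibleByNat _

theorem compHom'_surjective {X Y E : Type} [AddCommGroup X] [AddCommGroup Y] [AddCommGroup E]
    [DivisibleBy E ℤ] {i : X →+ Y} (hi : Function.Injective i) :
    Function.Surjective (AddMonoidHom.compHom' i : (Y →+ E) →+ (X →+ E)) :=
  (Module.Baer.of_divisible E).extension_property_addMonoidHom i hi

theorem exists_comp_eq_of_ker_le {X Y E : Type} [AddGroup X] [AddCommGroup Y] [AddCommGroup E]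
    [DivisibleBy E ℤ] (δ : X →+ Y) (χ : X →+ E) (h : δ.ker ≤ χ.ker) :
    ∃ ρ : Y →+ E, ρ.comp δ = χ := by
  let e := QuotientAddGroup.quotientKerEquivRange δ
  obtain ⟨ρ, hρ⟩ := compHom'_surjective (E := E) δ.range.subtype_injective
    ((QuotientAddGroup.lift δ.ker χ h).comp e.symm)
  refine ⟨ρ, AddMonoidHom.ext fun x => ?_⟩
  have hx : e.symm (δ.rangeRestrict x) = (x : X ⧸ δ.ker) := by
    rw [AddEquiv.symm_apply_eq]
    rfl
  simpa [hx] using DFunLike.congr_fun hρ (δ.rangeRestrict x)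

theorem exists_injective_dual (X : Type) [AddCommGroup X] [Finite X] :
    ∃ e : X →+ (X →+ Additive ℂˣ), Function.Injective e := by
  have : NeZero (Monoid.exponent (Multiplicative X) : ℂ) :=
    ⟨Nat.cast_ne_zero.mpr Monoid.exponent_ne_zero_of_finite⟩
  obtain ⟨e⟩ := CommGroup.monoidHom_mulEquiv_of_hasEnoughRootsOfUnity (Multiplicative X) ℂ
  let e' := AddEquiv.toMultiplicative.symm (e.symm.trans MonoidHom.toAdditiveRightMulEquiv)
  exact ⟨e'.toAddMonoidHom, e'.injective⟩

abbrev commGroupOfLeCenter {S : Subgroup G} (h : S ≤ Subgroup.center G) : CommGroup S :=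
  { S.toGroup with mul_comm := fun a b => Subtype.ext (Subgroup.mem_center_iff.mp (h a.2) b).symm }

theorem exists_injective_dual_of_le_center {S : Subgroup G} [Finite S]
    (h : S ≤ Subgroup.center G) :
    ∃ e : Additive S →+ (Additive S →+ Additive ℂˣ), Function.Injective e :=
  letI := commGroupOfLeCenter h
  exists_injective_dual (Additive S)

end Coefficients

theorem exists_injective_of_ker_eq {M N P : Type} [AddGroup M] [AddGroup N] [AddGroup P]
    (r : M →+ N) (hr : Function.Surjective r) (f : M →+ P) (h : ∀ m, f m = 0 ↔ r m = 0) :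
    ∃ ι : N →+ P, Function.Injective ι := by
  let e₁ := QuotientAddGroup.quotientKerEquivOfSurjective r hr
  let e₂ := QuotientAddGroup.quotientAddEquivOfEq (AddSubgroup.ext h : f.ker = r.ker)
  exact ⟨(QuotientAddGroup.kerLift f).comp (e₂.symm.toAddMonoidHom.comp e₁.symm.toAddMonoidHom),
    (QuotientAddGroup.kerLift_injective f).comp (e₂.symm.injective.comp e₁.symm.injective)⟩

instance finite_abTensor (X Y : Type) [Group X] [Group Y] [Finite X] [Finite Y] :
    Finite (AbTensor X Y) := by
  have : Module.Finite ℤ (AbTensor X Y) := Module.Finite.tensorProduct ℤ _ _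
  have : AddGroup.FG (AbTensor X Y) := Module.Finite.iff_addGroup_fg.mp this
  refine AddCommGroup.finite_of_fg_isAddTorsion _ fun x => isOfFinAddOrder_iff_nsmul_eq_zero.mpr
    ⟨Nat.card (Additive (Abelianization X)), Nat.card_pos, ?_⟩
  induction x using TensorProduct.induction_on with
  | zero => exact smul_zero _
  | tmul a b =>
    rw [← natCast_zsmul, TensorProduct.smul_tmul', natCast_zsmul, card_nsmul_eq_zero',
      TensorProduct.zero_tmul]
  | add u v hu hv => rw [smul_add, hu, hv, add_zero]

section Cocycles

theorem H2mk_eq_zero_iff_s18 (f : cocycles2 G D) :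
    H2mk f = 0 ↔ (f : G → G → D) ∈ coboundaries2 G D :=
  (QuotientAddGroup.eq_zero_iff f).trans AddSubgroup.mem_addSubgroupOf

def compCocycle {M : Type} [Group M] (u : G → G → M)
    (hu : ∀ x y z, u x y * u (x * y) z = u y z * u x (y * z)) :
    (Additive M →+ D) →+ cocycles2 G D where
  toFun χ := ⟨fun x y => χ (.ofMul (u x y)), fun x y z => by
    simp only [← map_add, ← ofMul_mul, hu]⟩
  map_zero' := rfl
  map_add' _ _ := rfl

theorem tmulAb_mul_left {P Q : Type} [Group P] [Group Q] (p p' : P) (q : Q) :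
    tmulAb (p * p') q = tmulAb p q + tmulAb p' q := by
  rw [tmulAb, map_mul, ofMul_mul, TensorProduct.add_tmul]

theorem tmulAb_mul_right {P Q : Type} [Group P] [Group Q] (p : P) (q q' : Q) :
    tmulAb p (q * q') = tmulAb p q + tmulAb p q' := by
  rw [tmulAb, map_mul, ofMul_mul, TensorProduct.tmul_add]

theorem tmulAb_one_left {P Q : Type} [Group P] [Group Q] (q : Q) : tmulAb (1 : P) q = 0 := by
  rw [tmulAb, map_one, ofMul_one, TensorProduct.zero_tmul]

theorem tmulAb_one_right {P Q : Type} [Group P] [Group Q] (p : P) : tmulAb p (1 : Q) = 0 := by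
  rw [tmulAb, map_one, ofMul_one, TensorProduct.tmul_zero]

theorem AbTensor.ext {P Q : Type} [Group P] [Group Q] {ℓ ℓ' : AbTensor P Q →+ D}
    (h : ∀ p q, ℓ (tmulAb p q) = ℓ' (tmulAb p q)) : ℓ = ℓ' := by
  have := TensorProduct.ext' (g := ℓ.toIntLinearMap) (h := ℓ'.toIntLinearMap) fun a b => by
    induction a using Additive.rec with | _ a => ?_
    induction b using Additive.rec with | _ b => ?_
    induction a using QuotientGroup.induction_on with | _ p => ?_
    induction b using QuotientGroup.induction_on with | _ q => ?_
    exact h p q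
  exact AddMonoidHom.ext (LinearMap.congr_fun this)

noncomputable def pairingCocycle {P Q : Type} [Group P] [Group Q] (f : G →* P) (g : G →* Q) :
    (AbTensor P Q →+ D) →+ cocycles2 G D where
  toFun ℓ := ⟨fun x y => ℓ (tmulAb (f x) (g y)), fun x y z => by
    simp only [map_mul, tmulAb_mul_left, tmulAb_mul_right, map_add]
    abel⟩
  map_zero' := rfl
  map_add' _ _ := rfl

theorem mem_commutator_iff_coe_mem {S : Subgroup G} {x : S} :
    x ∈ _root_.commutator S ↔ (x : G) ∈ ⁅S, S⁆ := by
  rw [← S.map_subtype_commutator]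
  exact (Subgroup.mem_map_iff_mem S.subtype_injective).symm

theorem abelianization_of_eq_one_iff {S : Subgroup G} {x : S} :
    Abelianization.of x = 1 ↔ (x : G) ∈ ⁅S, S⁆ := by
  rw [← MonoidHom.mem_ker, Abelianization.ker_of, mem_commutator_iff_coe_mem]

theorem eq_on_commutator_of_coboundary_eq {S : Subgroup G} (φ : G → D) (ψ : S → D)
    (h : ∀ x y : S, φ x + φ y - φ (x * y : G) = ψ x + ψ y - ψ (x * y))
    ⦃z : G⦄ (hz : z ∈ ⁅S, S⁆) : φ z = ψ ⟨z, S.commutator_le_self hz⟩ := by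
  let u : S →* Multiplicative D := MonoidHom.mk' (fun x => .ofAdd (φ x - ψ x)) fun x y => by
    rw [← ofAdd_add, Subgroup.coe_mul]
    congr 1
    rw [eq_comm, ← sub_eq_zero, ← sub_eq_zero.mpr (h x y)]
    abel
  have hz' : (⟨z, S.commutator_le_self hz⟩ : S) ∈ _root_.commutator S :=
    mem_commutator_iff_coe_mem.mpr hz
  exact sub_eq_zero.mp (congrArg Multiplicative.toAdd (Abelianization.commutator_subset_ker u hz'))

noncomputable def abelianizationAntidiag (H K : Subgroup G) :
    Additive ↥(H ⊓ K) →+ Additive (Abelianization H) × Additive (Abelianization K) :=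
  (Abelianization.of.comp (Subgroup.inclusion inf_le_left)).toAdditive.prod
    (-(Abelianization.of.comp (Subgroup.inclusion inf_le_right)).toAdditive)

theorem mem_of_abelianizationAntidiag_eq_zero {H K : Subgroup G} {a : Additive ↥(H ⊓ K)}
    (ha : abelianizationAntidiag H K a = 0) : (a.toMul : G) ∈ ⁅H, H⁆ ⊓ ⁅K, K⁆ := by
  simp only [abelianizationAntidiag, AddMonoidHom.prod_apply, Prod.mk_eq_zero,
    AddMonoidHom.neg_apply, neg_eq_zero] at ha
  exact ⟨abelianization_of_eq_one_iff.mp (congrArg Additive.toMul ha.1),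
    abelianization_of_eq_one_iff.mp (congrArg Additive.toMul ha.2)⟩

end Cocycles

structure CentralFactorization (H K : Subgroup G) where
  hp : G → G
  kp : G → G
  hp_mem : ∀ g, hp g ∈ H
  kp_mem : ∀ g, kp g ∈ K
  hp_mul_kp : ∀ g, hp g * kp g = g
  commute : ∀ h ∈ H, ∀ k ∈ K, Commute h k

namespace CentralFactorization

variable {H K : Subgroup G}

theorem nonempty [K.Normal] (hprod : H ⊔ K = ⊤) (hcomm : ∀ h ∈ H, ∀ k ∈ K, Commute h k) :
    Nonempty (CentralFactorization H K) := by
  have hdecomp (g : G) : ∃ h ∈ H, ∃ k ∈ K, h * k = g :=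
    Subgroup.mem_sup_of_normal_right.mp (hprod ▸ Subgroup.mem_top g)
  choose hp hp_mem kp kp_mem hp_mul_kp using hdecomp
  exact ⟨⟨hp, kp, hp_mem, kp_mem, hp_mul_kp, hcomm⟩⟩

theorem commute_of_mem_inf (c : CentralFactorization H K) {a : G} (ha : a ∈ H ⊓ K) (g : G) :
    Commute a g := by
  rw [← c.hp_mul_kp g]
  exact (c.commute _ (c.hp_mem g) a ha.2).symm.mul_right (c.commute a ha.1 _ (c.kp_mem g))

theorem inf_le_center (c : CentralFactorization H K) : H ⊓ K ≤ Subgroup.center G :=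
  fun _ ha => Subgroup.mem_center_iff.mpr fun g => (c.commute_of_mem_inf ha g).symm.eq

variable (c : CentralFactorization H K)

theorem hp_eq (g : G) : c.hp g = g * (c.kp g)⁻¹ := eq_mul_inv_of_mul_eq (c.hp_mul_kp g)

theorem kp_eq (g : G) : c.kp g = (c.hp g)⁻¹ * g := eq_inv_mul_of_mul_eq (c.hp_mul_kp g)

theorem hp_mem_inf {y : G} (hy : y ∈ K) : c.hp y ∈ H ⊓ K :=
  ⟨c.hp_mem y, by rw [c.hp_eq]; exact K.mul_mem hy (K.inv_mem (c.kp_mem y))⟩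

theorem kp_mem_inf {x : G} (hx : x ∈ H) : c.kp x ∈ H ⊓ K :=
  ⟨by rw [c.kp_eq]; exact H.mul_mem (H.inv_mem (c.hp_mem x)) hx, c.kp_mem x⟩

def defect (x y : G) : G := (c.hp (x * y))⁻¹ * (c.hp x * c.hp y)

theorem defect_eq_kp (x y : G) : c.defect x y = c.kp (x * y) * (c.kp x * c.kp y)⁻¹ := by
  have h : c.hp x * c.hp y * (c.kp x * c.kp y) = c.hp (x * y) * c.kp (x * y) :=
    calc c.hp x * c.hp y * (c.kp x * c.kp y) = c.hp x * (c.hp y * c.kp x) * c.kp y := by group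
      _ = c.hp x * (c.kp x * c.hp y) * c.kp y := by
        rw [(c.commute _ (c.hp_mem y) _ (c.kp_mem x)).eq]
      _ = (c.hp x * c.kp x) * (c.hp y * c.kp y) := by group
      _ = c.hp (x * y) * c.kp (x * y) := by rw [c.hp_mul_kp, c.hp_mul_kp, c.hp_mul_kp]
  rw [defect, inv_mul_eq_iff_eq_mul, ← mul_assoc, ← h, mul_inv_cancel_right]

theorem defect_mem (x y : G) : c.defect x y ∈ H ⊓ K := by
  refine ⟨H.mul_mem (H.inv_mem (c.hp_mem _)) (H.mul_mem (c.hp_mem x) (c.hp_mem y)), ?_⟩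
  rw [defect_eq_kp]
  exact K.mul_mem (c.kp_mem _) (K.inv_mem (K.mul_mem (c.kp_mem x) (c.kp_mem y)))

theorem defect_cocycle (x y z : G) :
    c.defect x y * c.defect (x * y) z = c.defect y z * c.defect x (y * z) := by
  have hp_mul (x y : G) : c.hp x * c.hp y = c.hp (x * y) * c.defect x y :=
    (mul_inv_cancel_left _ _).symm
  have central (x y g : G) := c.commute_of_mem_inf (c.defect_mem x y) g
  have h : c.hp (x * y * z) * (c.defect (x * y) z * c.defect x y) =
      c.hp (x * y * z) * (c.defect x (y * z) * c.defect y z) :=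
    calc _ = c.hp (x * y) * c.defect x y * c.hp z := by
          rw [← mul_assoc, ← hp_mul, mul_assoc, ← (central x y _).eq, ← mul_assoc]
      _ = c.hp x * (c.hp y * c.hp z) := by rw [← hp_mul, mul_assoc]
      _ = _ := by rw [hp_mul y z, ← mul_assoc, hp_mul, mul_assoc, mul_assoc x]
  rw [(central x y _).eq, mul_left_cancel h, (central y z _).eq]

def factorSet (x y : G) : ↥(H ⊓ K) := ⟨c.defect x y, c.defect_mem x y⟩

def hpInf {y : G} (hy : y ∈ K) : ↥(H ⊓ K) := ⟨c.hp y, c.hp_mem_inf hy⟩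

def kpInf {x : G} (hx : x ∈ H) : ↥(H ⊓ K) := ⟨c.kp x, c.kp_mem_inf hx⟩

theorem factorSet_cocycle (x y z : G) :
    c.factorSet x y * c.factorSet (x * y) z = c.factorSet y z * c.factorSet x (y * z) :=
  Subtype.ext (c.defect_cocycle x y z)

theorem hpInf_mul_kpInf {z : G} (hz : z ∈ H ⊓ K) : c.hpInf hz.2 * c.kpInf hz.1 = ⟨z, hz⟩ :=
  Subtype.ext (c.hp_mul_kp z)

theorem factorSet_of_mem_left {x y : G} (hx : x ∈ H) (hy : y ∈ H) :
    c.factorSet x y = c.kpInf (H.mul_mem hx hy) * (c.kpInf hx * c.kpInf hy)⁻¹ :=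
  Subtype.ext (c.defect_eq_kp x y)

theorem factorSet_of_mem_right {x y : G} (hx : x ∈ K) (hy : y ∈ K) :
    c.factorSet x y = (c.hpInf (K.mul_mem hx hy))⁻¹ * (c.hpInf hx * c.hpInf hy) :=
  rfl

theorem factorSet_comm {x y : G} (hx : x ∈ H) (hy : y ∈ K) :
    c.factorSet x y = c.factorSet y x := by
  refine Subtype.ext ?_
  change (c.hp (x * y))⁻¹ * (c.hp x * c.hp y) = (c.hp (y * x))⁻¹ * (c.hp y * c.hp x)
  rw [(c.commute x hx y hy).eq, (c.commute_of_mem_inf (c.hp_mem_inf hy) (c.hp x)).eq]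

def abelianizedParts (g : G) : Additive (Abelianization H) × Additive (Abelianization K) :=
  (.ofMul (.of ⟨c.hp g, c.hp_mem g⟩), .ofMul (.of ⟨c.kp g, c.kp_mem g⟩))

theorem abelianizationAntidiag_factorSet (x y : G) :
    abelianizationAntidiag H K (.ofMul (c.factorSet x y)) =
      c.abelianizedParts x + c.abelianizedParts y - c.abelianizedParts (x * y) := by
  have hH : Subgroup.inclusion inf_le_left (c.factorSet x y) =
      (⟨c.hp (x * y), c.hp_mem _⟩ : H)⁻¹ * (⟨c.hp x, c.hp_mem x⟩ * ⟨c.hp y, c.hp_mem y⟩) :=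
    rfl
  have hK : Subgroup.inclusion inf_le_right (c.factorSet x y) =
      (⟨c.kp (x * y), c.kp_mem _⟩ : K) * (⟨c.kp x, c.kp_mem x⟩ * ⟨c.kp y, c.kp_mem y⟩)⁻¹ :=
    Subtype.ext (c.defect_eq_kp x y)
  refine Prod.ext ?_ ?_ <;>
    simp only [abelianizationAntidiag, abelianizedParts, AddMonoidHom.prod_apply,
      AddMonoidHom.neg_apply, MonoidHom.toAdditive_apply_apply, MonoidHom.comp_apply, toMul_ofMul,
      hH, hK, map_mul, map_inv, ofMul_mul, ofMul_inv, Prod.fst_add, Prod.snd_add, Prod.fst_sub,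
      Prod.snd_sub] <;>
    abel

section QuotientLeft

variable [((H ⊓ K).subgroupOf H).Normal]

def toQuotientLeft : G →* ↥H ⧸ (H ⊓ K).subgroupOf H :=
  MonoidHom.mk' (fun g => (⟨c.hp g, c.hp_mem g⟩ : H)) fun x y => by
    rw [← QuotientGroup.mk_mul, QuotientGroup.eq, Subgroup.mem_subgroupOf]
    exact c.defect_mem x y

theorem toQuotientLeft_of_mem_left {x : G} (hx : x ∈ H) :
    c.toQuotientLeft x = ((⟨x, hx⟩ : H) : ↥H ⧸ (H ⊓ K).subgroupOf H) := by
  refine QuotientGroup.eq.mpr (Subgroup.mem_subgroupOf.mpr ?_)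
  change (c.hp x)⁻¹ * x ∈ H ⊓ K
  rw [← c.kp_eq]
  exact c.kp_mem_inf hx

theorem toQuotientLeft_of_mem_right {y : G} (hy : y ∈ K) : c.toQuotientLeft y = 1 :=
  (QuotientGroup.eq_one_iff _).mpr (c.hp_mem_inf hy)

end QuotientLeft

section QuotientRight

variable [((H ⊓ K).subgroupOf K).Normal]

def toQuotientRight : G →* ↥K ⧸ (H ⊓ K).subgroupOf K :=
  MonoidHom.mk' (fun g => (⟨c.kp g, c.kp_mem g⟩ : K)) fun x y => by
    rw [← QuotientGroup.mk_mul, QuotientGroup.eq_iff_div_mem, Subgroup.mem_subgroupOf]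
    have := c.defect_mem x y
    rwa [c.defect_eq_kp, ← div_eq_mul_inv] at this

theorem toQuotientRight_of_mem_right {y : G} (hy : y ∈ K) :
    c.toQuotientRight y = ((⟨y, hy⟩ : K) : ↥K ⧸ (H ⊓ K).subgroupOf K) := by
  refine QuotientGroup.eq_iff_div_mem.mpr (Subgroup.mem_subgroupOf.mpr ?_)
  rw [Subgroup.coe_div, div_eq_mul_inv, Subgroup.coe_mk, c.kp_eq, mul_inv_cancel_right]
  exact (H ⊓ K).inv_mem (c.hp_mem_inf hy)

theorem toQuotientRight_of_mem_left {x : G} (hx : x ∈ H) : c.toQuotientRight x = 1 :=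
  (QuotientGroup.eq_one_iff _).mpr (c.kp_mem_inf hx)

end QuotientRight

section ClassMap

variable [((H ⊓ K).subgroupOf H).Normal] [((H ⊓ K).subgroupOf K).Normal]

variable (D) in
noncomputable def cocycleMap :
    (Additive ↥(H ⊓ K) →+ D) ×
      (AbTensor (↥H ⧸ (H ⊓ K).subgroupOf H) (↥K ⧸ (H ⊓ K).subgroupOf K) →+ D) →+
      cocycles2 G D :=
  (compCocycle c.factorSet c.factorSet_cocycle).coprod
    (pairingCocycle c.toQuotientLeft c.toQuotientRight)

theorem cocycleMap_apply (χ : Additive ↥(H ⊓ K) →+ D)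
    (ℓ : AbTensor (↥H ⧸ (H ⊓ K).subgroupOf H) (↥K ⧸ (H ⊓ K).subgroupOf K) →+ D) (x y : G) :
    (c.cocycleMap D (χ, ℓ) : G → G → D) x y =
      χ (.ofMul (c.factorSet x y)) + ℓ (tmulAb (c.toQuotientLeft x) (c.toQuotientRight y)) :=
  rfl

theorem eq_zero_of_cocycleMap_mem_coboundaries {χ : Additive ↥(H ⊓ K) →+ D}
    {ℓ : AbTensor (↥H ⧸ (H ⊓ K).subgroupOf H) (↥K ⧸ (H ⊓ K).subgroupOf K) →+ D}
    (h : (c.cocycleMap D (χ, ℓ) : G → G → D) ∈ coboundaries2 G D) : ℓ = 0 := by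
  obtain ⟨φ, hφ⟩ := h
  refine AbTensor.ext fun p q => ?_
  obtain ⟨x, rfl⟩ := QuotientGroup.mk_surjective p
  obtain ⟨y, rfl⟩ := QuotientGroup.mk_surjective q
  have hsymm : (c.cocycleMap D (χ, ℓ) : G → G → D) x y =
      (c.cocycleMap D (χ, ℓ) : G → G → D) y x := by
    rw [hφ, hφ, (c.commute x x.2 y y.2).eq, add_comm (φ x)]
  rw [c.cocycleMap_apply, c.cocycleMap_apply, c.factorSet_comm x.2 y.2,
    c.toQuotientLeft_of_mem_right y.2, tmulAb_one_left, map_zero, add_zero,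
    c.toQuotientLeft_of_mem_left x.2, c.toQuotientRight_of_mem_right y.2] at hsymm
  exact add_eq_left.mp hsymm

theorem comp_inclusion_eq_zero_of_cocycleMap_mem_coboundaries {χ : Additive ↥(H ⊓ K) →+ D}
    {ℓ : AbTensor (↥H ⧸ (H ⊓ K).subgroupOf H) (↥K ⧸ (H ⊓ K).subgroupOf K) →+ D}
    (h : (c.cocycleMap D (χ, ℓ) : G → G → D) ∈ coboundaries2 G D) :
    χ.comp (Subgroup.inclusion (inf_commutator_le_inf H K)).toAdditive = 0 := by
  obtain ⟨φ, hφ⟩ := h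
  have onH := eq_on_commutator_of_coboundary_eq φ (fun x : H => -χ (.ofMul (c.kpInf x.2)))
    fun x y => by
      rw [← hφ, c.cocycleMap_apply, c.toQuotientRight_of_mem_left y.2, tmulAb_one_right,
        map_zero, add_zero, c.factorSet_of_mem_left x.2 y.2]
      simp only [ofMul_mul, ofMul_inv, map_add, map_neg]
      abel
  have onK := eq_on_commutator_of_coboundary_eq φ (fun y : K => χ (.ofMul (c.hpInf y.2)))
    fun x y => by
      rw [← hφ, c.cocycleMap_apply, c.toQuotientLeft_of_mem_right x.2, tmulAb_one_left,
        map_zero, add_zero, c.factorSet_of_mem_right x.2 y.2]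
      simp only [ofMul_mul, ofMul_inv, map_add, map_neg]
      abel
  ext ⟨z, hz⟩
  change χ (.ofMul ⟨z, inf_commutator_le_inf H K hz⟩) = 0
  rw [← c.hpInf_mul_kpInf (inf_commutator_le_inf H K hz), ofMul_mul, map_add, ← onK hz.2,
    ← neg_neg (χ _), ← onH hz.1, add_neg_cancel]

theorem cocycleMap_mem_coboundaries [DivisibleBy D ℤ] {χ : Additive ↥(H ⊓ K) →+ D}
    (hχ : χ.comp (Subgroup.inclusion (inf_commutator_le_inf H K)).toAdditive = 0) :
    (c.cocycleMap D (χ, 0) : G → G → D) ∈ coboundaries2 G D := by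
  have hker : (abelianizationAntidiag H K).ker ≤ χ.ker := fun a ha =>
    AddMonoidHom.mem_ker.mpr <|
      DFunLike.congr_fun hχ (.ofMul ⟨_, mem_of_abelianizationAntidiag_eq_zero ha⟩)
  obtain ⟨ρ, hρ⟩ := exists_comp_eq_of_ker_le _ χ hker
  refine ⟨fun g => ρ (c.abelianizedParts g), fun x y => ?_⟩
  rw [c.cocycleMap_apply, AddMonoidHom.zero_apply, add_zero, ← hρ, AddMonoidHom.comp_apply,
    c.abelianizationAntidiag_factorSet, map_sub, map_add]

variable (D) in
noncomputable def classMap :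
    (Additive ↥(H ⊓ K) →+ D) ×
      (AbTensor (↥H ⧸ (H ⊓ K).subgroupOf H) (↥K ⧸ (H ⊓ K).subgroupOf K) →+ D) →+ H2 G D :=
  (QuotientAddGroup.mk' _).comp (c.cocycleMap D)

theorem classMap_eq_zero_iff [DivisibleBy D ℤ] (χ : Additive ↥(H ⊓ K) →+ D)
    (ℓ : AbTensor (↥H ⧸ (H ⊓ K).subgroupOf H) (↥K ⧸ (H ⊓ K).subgroupOf K) →+ D) :
    c.classMap D (χ, ℓ) = 0 ↔
      χ.comp (Subgroup.inclusion (inf_commutator_le_inf H K)).toAdditive = 0 ∧ ℓ = 0 := by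
  refine (H2mk_eq_zero_iff_s18 _).trans ⟨fun h => ?_, ?_⟩
  · exact ⟨c.comp_inclusion_eq_zero_of_cocycleMap_mem_coboundaries h,
      c.eq_zero_of_cocycleMap_mem_coboundaries h⟩
  · rintro ⟨hχ, rfl⟩
    exact c.cocycleMap_mem_coboundaries hχ

end ClassMap

theorem exists_injective_to_H2 [((H ⊓ K).subgroupOf H).Normal]
    [((H ⊓ K).subgroupOf K).Normal] (c : CentralFactorization H K) (E : Type) [AddCommGroup E]
    [DivisibleBy E ℤ] :
    ∃ ι : (Additive ↥(⁅H, H⁆ ⊓ ⁅K, K⁆) →+ E) ×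
        (AbTensor (↥H ⧸ (H ⊓ K).subgroupOf H) (↥K ⧸ (H ⊓ K).subgroupOf K) →+ E) →+ H2 G E,
      Function.Injective ι := by
  have hZ : ⁅H, H⁆ ⊓ ⁅K, K⁆ ≤ H ⊓ K := inf_commutator_le_inf H K
  let _ := commGroupOfLeCenter c.inf_le_center
  let _ := commGroupOfLeCenter (hZ.trans c.inf_le_center)
  let r := (AddMonoidHom.compHom' (P := E) (Subgroup.inclusion hZ).toAdditive).prodMap
    (AddMonoidHom.id (AbTensor (↥H ⧸ (H ⊓ K).subgroupOf H) (↥K ⧸ (H ⊓ K).subgroupOf K) →+ E))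
  have hr : Function.Surjective r :=
    (compHom'_surjective (Subgroup.inclusion_injective hZ)).prodMap Function.surjective_id
  exact exists_injective_of_ker_eq r hr (c.classMap E) fun ⟨χ, ℓ⟩ =>
    (c.classMap_eq_zero_iff χ ℓ).trans Prod.mk_eq_zero.symm

end CentralFactorization

theorem schurMultiplier_contains_general {G : Type} [Group G] [Finite G] (H K : Subgroup G)
    [K.Normal]
    (hprod : H ⊔ K = ⊤) (hcomm : ∀ h ∈ H, ∀ k ∈ K, Commute h k)
    [((H ⊓ K).subgroupOf H).Normal] [((H ⊓ K).subgroupOf K).Normal] :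
    ∃ ι : (Additive ↥(⁅H, H⁆ ⊓ ⁅K, K⁆) ×
        AbTensor (↥H ⧸ (H ⊓ K).subgroupOf H) (↥K ⧸ (H ⊓ K).subgroupOf K)) →+
      H2 G (Additive ℂˣ),
      Function.Injective ι := by
  obtain ⟨c⟩ := CentralFactorization.nonempty hprod hcomm
  obtain ⟨ι, hι⟩ := c.exists_injective_to_H2 (Additive ℂˣ)
  obtain ⟨eZ, heZ⟩ := exists_injective_dual_of_le_center
    ((inf_commutator_le_inf H K).trans c.inf_le_center)
  obtain ⟨eT, heT⟩ := exists_injective_dual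
    (AbTensor (↥H ⧸ (H ⊓ K).subgroupOf H) (↥K ⧸ (H ⊓ K).subgroupOf K))
  exact ⟨ι.comp (eZ.prodMap eT), hι.comp (heZ.prodMap heT)⟩

/-- **Wiegold-type embedding.** For a finite central product `G = HK`, the Schur
multiplier `M(G) = H²(G, ℂ*)` contains a subgroup isomorphic to
`Z × (H/A ⊗ K/A)`. -/
theorem schurMultiplier_contains {G : Type} [Group G] [Finite G] (H K : Subgroup G)
    [H.Normal] [K.Normal]
    (hprod : H ⊔ K = ⊤) (hcomm : ∀ h ∈ H, ∀ k ∈ K, Commute h k)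
    [((H ⊓ K).subgroupOf H).Normal] [((H ⊓ K).subgroupOf K).Normal] :
    ∃ ι : (Additive ↥(⁅H, H⁆ ⊓ ⁅K, K⁆) ×
        AbTensor (↥H ⧸ (H ⊓ K).subgroupOf H) (↥K ⧸ (H ⊓ K).subgroupOf K)) →+
      H2 G (Additive ℂˣ),
      Function.Injective ι :=
  schurMultiplier_contains_general H K hprod hcomm

end SchurCP
end
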